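/- arXiv:2406.08127 — 6 statements merged into one kernel-verified Lean document; each statement's English description precedes it below -/
import Mathlib

section
/- Let X be a finite poset and a, b ∈ X incomparable. Then the integration domain Δ(X) is the disjoint union, up to a set of measure zero, of Δ(X_a^b) and Δ(X_b^a); more precisely, the subsets {t ∈ Δ(X) : t_a < t_b} and {t ∈ Δ(X) : t_b < t_a} equal Δ(X_a^b) and Δ(X_b^a) respectively. -/
/-- The open order-polytope domain `Δ(X) ⊆ (0,1)^X` of a poset `(X, r)`. -/
def Delta {X : Type*} (r : X → X → Prop) : Set (X → ℝ) :=
  {t | (∀ x, t x ∈ Set.Ioo (0 : ℝ) 1) ∧ ∀ x y, r x y → x ≠ y → t x < t y}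

/-- The order `X_a^b`: `r` enlarged by all pairs `(x,y)` with `x ⪯ a` and `b ⪯ y`. -/
def orderJoin {X : Type*} (r : X → X → Prop) (a b : X) : X → X → Prop :=
  fun x y => r x y ∨ (r x a ∧ r b y)

lemma stmt3_aux {X : Type*} (r : X → X → Prop)
    (hr : IsPartialOrder X r) (a b : X) (hab : ¬ r a b) :
    {t ∈ Delta r | t a < t b} = Delta (orderJoin r a b) := by
  ext t
  constructor
  · rintro ⟨⟨h01, hmono⟩, hlt⟩
    refine ⟨h01, fun x y hxy hne => ?_⟩
    rcases hxy with h | ⟨hxa, hby⟩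
    · exact hmono x y h hne
    · have h1 : t x ≤ t a := by
        rcases eq_or_ne x a with rfl | hx
        · exact le_refl _
        · exact (hmono x a hxa hx).le
      have h2 : t b ≤ t y := by
        rcases eq_or_ne b y with rfl | hy
        · exact le_refl _
        · exact (hmono b y hby hy).le
      exact lt_of_le_of_lt h1 (lt_of_lt_of_le hlt h2)
  · rintro ⟨h01, hmono⟩
    have hne : a ≠ b := fun h => hab (h ▸ hr.refl a)
    refine ⟨⟨h01, fun x y hxy => hmono x y (Or.inl hxy)⟩, ?_⟩
    exact hmono a b (Or.inr ⟨hr.refl a, hr.refl b⟩) hne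

/-- `{t ∈ Δ(X) : t_a < t_b} = Δ(X_a^b)` and
`{t ∈ Δ(X) : t_b < t_a} = Δ(X_b^a)`, so `Δ(X)` is the disjoint union of
`Δ(X_a^b)` and `Δ(X_b^a)` up to measure zero. -/
theorem stmt3 {X : Type*} [Fintype X] (r : X → X → Prop)
    (hr : IsPartialOrder X r) (a b : X)
    (hab : ¬ r a b) (hba : ¬ r b a) :
    {t ∈ Delta r | t a < t b} = Delta (orderJoin r a b) ∧
      {t ∈ Delta r | t b < t a} = Delta (orderJoin r b a) := by
  exact ⟨stmt3_aux r hr a b hab, stmt3_aux r hr b a hba⟩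
end

section
/- Let X be a finite labeled poset with labeling δ: X → ℂ, let γ: [0,1] → ℂ \ δ(X) (on the open interval) be a piecewise smooth path, and suppose X is admissible with respect to γ. Then for disjoint admissible labeled posets X and Y, the Yamamoto integral satisfies I_γ(X) · I_γ(Y) = I_γ(X ⊔ Y). -/
open MeasureTheory

/-- Yamamoto's integral `I_γ(X) = ∫_{Δ(X)} ∏_{x∈X} ω_{δ(x)}(γ(t_x))`,
where `ω_a(t) = dt/(t-a)`. -/
noncomputable def YI {X : Type*} [Fintype X] (r : X → X → Prop)
    (δ : X → ℂ) (γ : ℝ → ℂ) : ℂ :=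
  ∫ t in Delta r, ∏ x, deriv γ (t x) / (γ (t x) - δ x)

/-- `x` is a maximal element for the order `r`. -/
def IsMaximalIn {X : Type*} (r : X → X → Prop) (x : X) : Prop := ∀ y, r x y → y = x

/-- `x` is a minimal element for the order `r`. -/
def IsMinimalIn {X : Type*} (r : X → X → Prop) (x : X) : Prop := ∀ y, r y x → y = x

/-- A labeled poset is admissible w.r.t. `γ` if no maximal element is labeled
`γ(1)` and no minimal element is labeled `γ(0)`. -/
def Admissible {X : Type*} (r : X → X → Prop) (δ : X → ℂ) (γ : ℝ → ℂ) : Prop :=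
  (∀ x, IsMaximalIn r x → δ x ≠ γ 1) ∧ (∀ x, IsMinimalIn r x → δ x ≠ γ 0)

/-- for disjoint admissible labeled posets, `I_γ(X)·I_γ(Y) = I_γ(X ⊔ Y)`. -/
theorem stmt4 {X Y : Type*} [Fintype X] [Fintype Y]
    (rX : X → X → Prop) (rY : Y → Y → Prop)
    (hX : IsPartialOrder X rX) (hY : IsPartialOrder Y rY)
    (δX : X → ℂ) (δY : Y → ℂ) (γ : ℝ → ℂ)
    (hγ : ContDiffOn ℝ 1 γ (Set.Icc 0 1))
    (havoid : ∀ t ∈ Set.Ioo (0 : ℝ) 1, (∀ x, γ t ≠ δX x) ∧ ∀ y, γ t ≠ δY y)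
    (hadmX : Admissible rX δX γ) (hadmY : Admissible rY δY γ) :
    YI rX δX γ * YI rY δY γ = YI (Sum.LiftRel rX rY) (Sum.elim δX δY) γ := by
  classical
  set e := MeasurableEquiv.sumPiEquivProdPi (fun _ : X ⊕ Y => ℝ) with he
  have hmp : MeasurePreserving e.symm volume volume :=
    MeasureTheory.volume_measurePreserving_sumPiEquivProdPi_symm _
  have hkey : e.symm ⁻¹' Delta (Sum.LiftRel rX rY) = Delta rX ×ˢ Delta rY := by
    ext p
    obtain ⟨f, g⟩ := p
    have happ : ∀ i : X ⊕ Y, e.symm (f, g) i = Sum.elim f g i := by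
      rintro (i | i) <;> rfl
    constructor
    · rintro ⟨h1, h2⟩
      refine ⟨⟨fun x => ?_, fun x y hxy hne => ?_⟩, fun y => ?_, fun x y hxy hne => ?_⟩
      · have := h1 (Sum.inl x); rwa [happ] at this
      · have := h2 (Sum.inl x) (Sum.inl y) (Sum.LiftRel.inl hxy)
          (fun h => hne (Sum.inl.inj h))
        rwa [happ, happ] at this
      · have := h1 (Sum.inr y); rwa [happ] at this
      · have := h2 (Sum.inr x) (Sum.inr y) (Sum.LiftRel.inr hxy)
          (fun h => hne (Sum.inr.inj h))
        rwa [happ, happ] at this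
    · rintro ⟨⟨h1X, h2X⟩, h1Y, h2Y⟩
      constructor
      · rintro (i | i) <;> rw [happ]
        · exact h1X i
        · exact h1Y i
      · rintro (x | x) (y | y) hxy hne <;> rw [happ, happ] <;> cases hxy
        · exact h2X x y ‹_› (fun h => hne (by rw [h]))
        · exact h2Y x y ‹_› (fun h => hne (by rw [h]))
  have hint : YI (Sum.LiftRel rX rY) (Sum.elim δX δY) γ
      = ∫ p in Delta rX ×ˢ Delta rY,
          (fun t : X ⊕ Y → ℝ => ∏ x, deriv γ (t x) / (γ (t x) - Sum.elim δX δY x))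
            (e.symm p) := by
    rw [YI, ← hmp.setIntegral_preimage_emb e.symm.measurableEmbedding, hkey]
  rw [hint]
  have : ∀ p : (X → ℝ) × (Y → ℝ),
      (fun t : X ⊕ Y → ℝ => ∏ x, deriv γ (t x) / (γ (t x) - Sum.elim δX δY x)) (e.symm p)
      = (∏ x, deriv γ (p.1 x) / (γ (p.1 x) - δX x))
        * ∏ y, deriv γ (p.2 y) / (γ (p.2 y) - δY y) := by
    rintro ⟨f, g⟩
    show (∏ x : X ⊕ Y, deriv γ (e.symm (f, g) x) / (γ (e.symm (f, g) x) - Sum.elim δX δY x))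
      = _
    rw [Fintype.prod_sum_type]
    rfl
  simp_rw [this]
  rw [MeasureTheory.Measure.volume_eq_prod, YI, YI]
  exact (MeasureTheory.setIntegral_prod_mul
    (fun f : X → ℝ => ∏ x, deriv γ (f x) / (γ (f x) - δX x))
    (fun g : Y → ℝ => ∏ y, deriv γ (g y) / (γ (g y) - δY y))
    (Delta rX) (Delta rY)).symm
end

section
/- Let X be a finite poset and Y ∈ X_r (i.e., |Y| = r and no element of X∖Y lies between two elements of Y). For any two total orders Y₁, Y₂ on Y extending the induced order, the map T_{Y₁,Y₂} replacing the internal order Y₁ of the block Y by Y₂ is a bijection from Tot_{Y₁}(X) to Tot_{Y₂}(X). Moreover T_{Y₂,Y₁} is its two-sided inverse. -/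
variable {X : Type*}

/-- The set of total orders on `X` extending `r` (linear extensions). -/
def Tot (r : X → X → Prop) : Set (X → X → Prop) :=
  {s | IsLinearOrder X s ∧ ∀ x y, r x y → s x y}

/-- `s` is a linear order when restricted to the subset `S`, with support in `S`. -/
def LinOn (S : Set X) (s : X → X → Prop) : Prop :=
  (∀ x y, s x y → x ∈ S ∧ y ∈ S) ∧ (∀ x ∈ S, s x x) ∧
  (∀ x y, s x y → s y x → x = y) ∧ (∀ x y z, s x y → s y z → s x z) ∧
  (∀ x ∈ S, ∀ y ∈ S, s x y ∨ s y x)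

/-- `Y` appears as a consecutive block for the total order `s`. -/
def Consecutive (s : X → X → Prop) (Y : Set X) : Prop :=
  ∀ x, x ∉ Y → ∀ y ∈ Y, ∀ y' ∈ Y, ¬ (s y x ∧ s x y')

/-- No element of `X∖Y` lies between two elements of `Y` (part of `Y ∈ X_r`). -/
def NoBetween (r : X → X → Prop) (Y : Set X) : Prop :=
  ∀ x, x ∉ Y → ¬ ∃ y ∈ Y, ∃ y' ∈ Y, r y x ∧ r x y'

/-- `Tot_{Y₁}(X)`: linear extensions of `r` in which `Y` is a consecutive block
whose induced internal order is exactly `Y₁`. -/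
def TotB (r : X → X → Prop) (Y : Set X) (Y₁ : X → X → Prop) : Set (X → X → Prop) :=
  {s ∈ Tot r | Consecutive s Y ∧ ∀ x ∈ Y, ∀ y ∈ Y, (s x y ↔ Y₁ x y)}

/-- `T_{Y₁,Y₂}(s) = (s ∖ Y₁) ∪ Y₂`, replacing the internal order of the block. -/
def Treplace (Y₁ Y₂ s : X → X → Prop) : X → X → Prop :=
  fun x y => (s x y ∧ ¬ Y₁ x y) ∨ Y₂ x y

lemma treplace_in {Y : Set X} {Y₁ Y₂ s : X → X → Prop}
    (hsY : ∀ x ∈ Y, ∀ y ∈ Y, (s x y ↔ Y₁ x y))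
    {x y : X} (hx : x ∈ Y) (hy : y ∈ Y) :
    Treplace Y₁ Y₂ s x y ↔ Y₂ x y := by
  constructor
  · rintro (⟨hs, hn⟩ | h2)
    · exact absurd ((hsY x hx y hy).mp hs) hn
    · exact h2
  · exact Or.inr

lemma treplace_out {Y : Set X} {Y₁ Y₂ s : X → X → Prop}
    (h1s : ∀ x y, Y₁ x y → x ∈ Y ∧ y ∈ Y)
    (h2s : ∀ x y, Y₂ x y → x ∈ Y ∧ y ∈ Y)
    {x y : X} (h : ¬ (x ∈ Y ∧ y ∈ Y)) :
    Treplace Y₁ Y₂ s x y ↔ s x y := by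
  constructor
  · rintro (⟨hs, _⟩ | h2)
    · exact hs
    · exact absurd (h2s x y h2) h
  · exact fun hs => Or.inl ⟨hs, fun h1 => h (h1s x y h1)⟩

lemma treplace_mem {Y : Set X} {r Y₁ Y₂ : X → X → Prop}
    (hY₁ : LinOn Y Y₁)
    (hY₂ : LinOn Y Y₂) (hY₂ext : ∀ x ∈ Y, ∀ y ∈ Y, r x y → Y₂ x y)
    {s : X → X → Prop} (hs : s ∈ TotB r Y Y₁) :
    Treplace Y₁ Y₂ s ∈ TotB r Y Y₂ := by
  obtain ⟨⟨hlin, hext⟩, hcons, hind⟩ := hs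
  have h1s := hY₁.1
  have h2s := hY₂.1
  have hin : ∀ {x y : X}, x ∈ Y → y ∈ Y → (Treplace Y₁ Y₂ s x y ↔ Y₂ x y) :=
    fun hx hy => treplace_in hind hx hy
  have hout : ∀ {x y : X}, ¬ (x ∈ Y ∧ y ∈ Y) → (Treplace Y₁ Y₂ s x y ↔ s x y) :=
    fun h => treplace_out h1s h2s h
  have stot : ∀ a b, s a b ∨ s b a := fun a b => hlin.total a b
  have strans : ∀ {a b c}, s a b → s b c → s a c := fun h1 h2 => hlin.trans _ _ _ h1 h2
  refine ⟨⟨?_, ?_⟩, ?_, fun x hx y hy => hin hx hy⟩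
  · -- IsLinearOrder
    refine { refl := ?_, trans := ?_, antisymm := ?_, total := ?_ }
    · intro a
      by_cases ha : a ∈ Y
      · exact (hin ha ha).mpr (hY₂.2.1 a ha)
      · exact (hout (fun hh => ha hh.1)).mpr (hlin.refl a)
    · intro a b c hab hbc
      by_cases ha : a ∈ Y <;> by_cases hb : b ∈ Y <;> by_cases hc : c ∈ Y
      · exact (hin ha hc).mpr (hY₂.2.2.2.1 a b c ((hin ha hb).mp hab) ((hin hb hc).mp hbc))
      · -- a b ∈ Y, c ∉ Y
        have hbc' : s b c := (hout (fun hh => hc hh.2)).mp hbc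
        refine (hout (fun hh => hc hh.2)).mpr ?_
        rcases stot a c with h | h
        · exact h
        · exact absurd ⟨hbc', h⟩ (hcons c hc b hb a ha)
      · -- a c ∈ Y, b ∉ Y
        have hab' : s a b := (hout (fun hh => hb hh.2)).mp hab
        have hbc' : s b c := (hout (fun hh => hb hh.1)).mp hbc
        exact absurd ⟨hab', hbc'⟩ (hcons b hb a ha c hc)
      · exact (hout (fun hh => hc hh.2)).mpr
          (strans ((hout (fun hh => hb hh.2)).mp hab) ((hout (fun hh => hb hh.1)).mp hbc))
      · -- a ∉ Y, b c ∈ Y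
        have hab' : s a b := (hout (fun hh => ha hh.1)).mp hab
        refine (hout (fun hh => ha hh.1)).mpr ?_
        rcases stot a c with h | h
        · exact h
        · exact absurd ⟨h, hab'⟩ (hcons a ha c hc b hb)
      · exact (hout (fun hh => ha hh.1)).mpr
          (strans ((hout (fun hh => ha hh.1)).mp hab) ((hout (fun hh => hc hh.2)).mp hbc))
      · exact (hout (fun hh => ha hh.1)).mpr
          (strans ((hout (fun hh => ha hh.1)).mp hab) ((hout (fun hh => hb hh.1)).mp hbc))
      · exact (hout (fun hh => ha hh.1)).mpr
          (strans ((hout (fun hh => ha hh.1)).mp hab) ((hout (fun hh => hb hh.1)).mp hbc))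
    · intro a b hab hba
      by_cases h : a ∈ Y ∧ b ∈ Y
      · exact hY₂.2.2.1 a b ((hin h.1 h.2).mp hab) ((hin h.2 h.1).mp hba)
      · have h' : ¬ (b ∈ Y ∧ a ∈ Y) := fun hh => h ⟨hh.2, hh.1⟩
        exact hlin.antisymm _ _ ((hout h).mp hab) ((hout h').mp hba)
    · intro a b
      by_cases h : a ∈ Y ∧ b ∈ Y
      · rw [hin h.1 h.2, hin h.2 h.1]
        exact hY₂.2.2.2.2 a h.1 b h.2
      · have h' : ¬ (b ∈ Y ∧ a ∈ Y) := fun hh => h ⟨hh.2, hh.1⟩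
        rw [hout h, hout h']
        exact stot a b
  · -- extends r
    intro a b hab
    by_cases h : a ∈ Y ∧ b ∈ Y
    · exact (hin h.1 h.2).mpr (hY₂ext a h.1 b h.2 hab)
    · exact (hout h).mpr (hext a b hab)
  · -- Consecutive
    intro x hx y hy y' hy' ⟨h1, h2⟩
    exact hcons x hx y hy y' hy'
      ⟨(hout (fun hh => hx hh.2)).mp h1, (hout (fun hh => hx hh.1)).mp h2⟩

lemma treplace_inv {Y : Set X} {Y₁ Y₂ s : X → X → Prop}
    (h1s : ∀ x y, Y₁ x y → x ∈ Y ∧ y ∈ Y)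
    (h2s : ∀ x y, Y₂ x y → x ∈ Y ∧ y ∈ Y)
    (hsY : ∀ x ∈ Y, ∀ y ∈ Y, (s x y ↔ Y₁ x y)) :
    Treplace Y₂ Y₁ (Treplace Y₁ Y₂ s) = s := by
  funext x y
  have htY : ∀ x ∈ Y, ∀ y ∈ Y, (Treplace Y₁ Y₂ s x y ↔ Y₂ x y) :=
    fun x hx y hy => treplace_in hsY hx hy
  apply propext
  by_cases h : x ∈ Y ∧ y ∈ Y
  · rw [treplace_in htY h.1 h.2]
    exact (hsY x h.1 y h.2).symm
  · rw [treplace_out h2s h1s h, treplace_out h1s h2s h]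

/-- for `Y ∈ X_r` and total orders `Y₁, Y₂` on `Y` extending the
induced order, `T_{Y₁,Y₂} : Tot_{Y₁}(X) → Tot_{Y₂}(X)` is a bijection with
two-sided inverse `T_{Y₂,Y₁}`. -/
theorem stmt9 [Fintype X] (r : X → X → Prop) (hr : IsPartialOrder X r)
    (Y : Set X) (n : ℕ) (hcard : Y.ncard = n) (hbetw : NoBetween r Y)
    (Y₁ Y₂ : X → X → Prop)
    (hY₁ : LinOn Y Y₁) (hY₁ext : ∀ x ∈ Y, ∀ y ∈ Y, r x y → Y₁ x y)
    (hY₂ : LinOn Y Y₂) (hY₂ext : ∀ x ∈ Y, ∀ y ∈ Y, r x y → Y₂ x y) :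
    (∀ s ∈ TotB r Y Y₁, Treplace Y₁ Y₂ s ∈ TotB r Y Y₂) ∧
    (∀ s ∈ TotB r Y Y₁, Treplace Y₂ Y₁ (Treplace Y₁ Y₂ s) = s) ∧
    (∀ s ∈ TotB r Y Y₂, Treplace Y₁ Y₂ (Treplace Y₂ Y₁ s) = s) ∧
    Set.BijOn (Treplace Y₁ Y₂) (TotB r Y Y₁) (TotB r Y Y₂) := by
  have mem12 : ∀ s ∈ TotB r Y Y₁, Treplace Y₁ Y₂ s ∈ TotB r Y Y₂ :=
    fun s hs => treplace_mem hY₁ hY₂ hY₂ext hs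
  have mem21 : ∀ s ∈ TotB r Y Y₂, Treplace Y₂ Y₁ s ∈ TotB r Y Y₁ :=
    fun s hs => treplace_mem hY₂ hY₁ hY₁ext hs
  have inv1 : ∀ s ∈ TotB r Y Y₁, Treplace Y₂ Y₁ (Treplace Y₁ Y₂ s) = s :=
    fun s hs => treplace_inv hY₁.1 hY₂.1 hs.2.2
  have inv2 : ∀ s ∈ TotB r Y Y₂, Treplace Y₁ Y₂ (Treplace Y₂ Y₁ s) = s :=
    fun s hs => treplace_inv hY₂.1 hY₁.1 hs.2.2
  refine ⟨mem12, inv1, inv2, mem12, ?_, ?_⟩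
  · intro s hs s' hs' heq
    rw [← inv1 s hs, ← inv1 s' hs', heq]
  · intro s hs
    exact ⟨Treplace Y₂ Y₁ s, mem21 s hs, inv2 s hs⟩
end

section
/- For integers i ≥ 0 and m ≥ 1, the identity Σ_{k=0}^{i} (−1)^{i−k+1} · (m/(m+k)) · C(i,k) = (−1)^{i+1} / C(i+m, m) holds. -/
/-!
Writing `m / (m + k) = m · 1/(m + k)`, the claim is the case `x = m` of
`∑ₖ (-1)ᵏ C(n,k) / (x + k) = n! / (x (x+1) ⋯ (x+n))`. Pascal's rule turns the left-hand side
`Sₙ₊₁(x)` into `Sₙ(x) - Sₙ(x + 1)`, and the right-hand side satisfies the same recursion, since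
`1/(x ⋯ (x+n)) - 1/((x+1) ⋯ (x+n+1)) = (n+1)/(x ⋯ (x+n+1))`.
-/

open Finset Polynomial Nat

theorem ascPochhammer_succ_eval_left {S : Type*} [CommSemiring S] (n : ℕ) (x : S) :
    (ascPochhammer S (n + 1)).eval x = x * (ascPochhammer S n).eval (x + 1) := by
  rw [ascPochhammer_succ_left, eval_mul, eval_X, eval_comp, eval_add, eval_X, eval_one]

theorem sum_range_choose_mul_neg_one_pow_div_add {K : Type*} [Field K] (n : ℕ) (x : K)
    (hx : (ascPochhammer K (n + 1)).eval x ≠ 0) :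
    ∑ k ∈ range (n + 1), (n.choose k : K) * ((-1) ^ k / (x + k)) =
      n ! / (ascPochhammer K (n + 1)).eval x := by
  induction n generalizing x with
  | zero => simp
  | succ n ih =>
    have hx₀ : (ascPochhammer K (n + 1)).eval x ≠ 0 :=
      left_ne_zero_of_mul (ascPochhammer_succ_eval (n + 1) x ▸ hx)
    have hx₁ : (ascPochhammer K (n + 1)).eval (x + 1) ≠ 0 :=
      right_ne_zero_of_mul (ascPochhammer_succ_eval_left (n + 1) x ▸ hx)
    have hxn : x + (n + 1 : ℕ) ≠ 0 :=
      right_ne_zero_of_mul (ascPochhammer_succ_eval (n + 1) x ▸ hx)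
    have pascal := sum_choose_succ_mul (fun k _ ↦ ((-1) ^ k / (x + k) : K)) n
    have shift : ∑ k ∈ range (n + 1), (n.choose k : K) * ((-1) ^ (k + 1) / (x + (k + 1 : ℕ))) =
        -∑ k ∈ range (n + 1), (n.choose k : K) * ((-1) ^ k / (x + 1 + k)) := by
      rw [← sum_neg_distrib]
      refine sum_congr rfl fun k _ ↦ ?_
      push_cast
      ring
    have two_ways := (ascPochhammer_succ_eval (n + 1) x).symm.trans
      (ascPochhammer_succ_eval_left (n + 1) x)
    rw [pascal, shift, ih x hx₀, ih (x + 1) hx₁, ascPochhammer_succ_eval (n + 1) x,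
      Nat.factorial_succ]
    push_cast at two_ways hxn ⊢
    field_simp
    linear_combination (-(n ! : K)) * two_ways

theorem Nat.add_choose_mul_mul_factorial (i m : ℕ) :
    (i + m).choose m * m * i ! = m.ascFactorial (i + 1) := by
  cases m with
  | zero => simp [Nat.zero_ascFactorial]
  | succ n =>
    apply Nat.mul_left_cancel n.factorial_pos
    rw [Nat.factorial_mul_ascFactorial, show n + (i + 1) = i + (n + 1) by omega,
      ← Nat.add_choose_mul_factorial_mul_factorial i (n + 1), Nat.factorial_succ]
    ring

/-- for `i ≥ 0`, `m ≥ 1`,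
`Σ_{k=0}^{i} (−1)^{i−k+1} (m/(m+k)) C(i,k) = (−1)^{i+1} / C(i+m, m)`. -/
theorem stmt14 (i m : ℕ) (hm : 1 ≤ m) :
    ∑ k ∈ Finset.range (i + 1),
      (-1 : ℚ) ^ (i - k + 1) * ((m : ℚ) / ((m : ℚ) + (k : ℚ))) * (i.choose k : ℚ) =
      (-1 : ℚ) ^ (i + 1) / ((i + m).choose m : ℚ) := by
  have hpos : (0 : ℚ) < (ascPochhammer ℚ (i + 1)).eval (m : ℚ) :=
    ascPochhammer_pos _ _ (by exact_mod_cast hm)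
  have factor : ∑ k ∈ range (i + 1),
      (-1 : ℚ) ^ (i - k + 1) * ((m : ℚ) / ((m : ℚ) + (k : ℚ))) * (i.choose k : ℚ) =
      (-1) ^ (i + 1) * m * ∑ k ∈ range (i + 1), (i.choose k : ℚ) * ((-1) ^ k / (m + k)) := by
    rw [mul_sum]
    refine sum_congr rfl fun k hk ↦ ?_
    have hk' := mem_range_succ_iff.mp hk
    have hsign : (-1 : ℚ) ^ (i - k + 1) = (-1) ^ (i + 1) * (-1) ^ k := by
      rw [← pow_add]
      exact neg_one_pow_congr (by simp only [Nat.even_iff]; omega)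
    rw [hsign]
    ring
  rw [factor, sum_range_choose_mul_neg_one_pow_div_add i _ hpos.ne',
    ascPochhammer_nat_eq_natCast_ascFactorial, ← Nat.add_choose_mul_mul_factorial]
  push_cast
  field_simp
end

section
/- Let X be a finite poset and Y ∈ X_r with total orders Y₁, Y₂ on Y. If X̄ ∈ Tot_{Y₁}(X), then in T_{Y₁,Y₂}(X̄) the subset Y is again consecutive (Y ∈ (T_{Y₁,Y₂}(X̄))_r) with induced order Y₂, and T_{Y₁,Y₂}(X̄) is a total order on X. -/
variable {X : Type*}

/-- if `X̄ ∈ Tot_{Y₁}(X)` with `Y ∈ X_r`, then `T_{Y₁,Y₂}(X̄)`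
is again a total order extending `r` in which `Y` is a consecutive block with
induced order `Y₂`, i.e. `T_{Y₁,Y₂}(X̄) ∈ Tot_{Y₂}(X)`. -/
theorem stmt16 [Fintype X] (r : X → X → Prop) (hr : IsPartialOrder X r)
    (Y : Set X) (n : ℕ) (hcard : Y.ncard = n) (hbetw : NoBetween r Y)
    (Y₁ Y₂ : X → X → Prop)
    (hY₁ : LinOn Y Y₁) (hY₁ext : ∀ x ∈ Y, ∀ y ∈ Y, r x y → Y₁ x y)
    (hY₂ : LinOn Y Y₂) (hY₂ext : ∀ x ∈ Y, ∀ y ∈ Y, r x y → Y₂ x y) :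
    ∀ s ∈ TotB r Y Y₁, Treplace Y₁ Y₂ s ∈ TotB r Y Y₂ := by
  intro s hs
  obtain ⟨⟨hlin, hext⟩, hcons, hind⟩ := hs
  set t := Treplace Y₁ Y₂ s with ht
  -- outside pairs: t ↔ s
  have hout : ∀ x y, (x ∉ Y ∨ y ∉ Y) → (t x y ↔ s x y) := by
    intro x y h
    constructor
    · rintro (⟨hsxy, _⟩ | h2)
      · exact hsxy
      · exact absurd (hY₂.1 x y h2) (by tauto)
    · intro hsxy
      exact Or.inl ⟨hsxy, fun h1 => absurd (hY₁.1 x y h1) (by tauto)⟩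
  -- inside pairs: t ↔ Y₂
  have hin : ∀ x ∈ Y, ∀ y ∈ Y, (t x y ↔ Y₂ x y) := by
    intro x hx y hy
    constructor
    · rintro (⟨hsxy, hn⟩ | h2)
      · exact absurd ((hind x hx y hy).1 hsxy) hn
      · exact h2
    · exact Or.inr
  have hrefl : ∀ x, t x x := by
    intro x
    by_cases hx : x ∈ Y
    · exact (hin x hx x hx).2 (hY₂.2.1 x hx)
    · exact (hout x x (Or.inl hx)).2 (hlin.refl x)
  have htrans : ∀ x y z, t x y → t y z → t x z := by
    intro x y z hxy hyz
    by_cases hx : x ∈ Y <;> by_cases hy : y ∈ Y <;> by_cases hz : z ∈ Y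
    · exact (hin x hx z hz).2 (hY₂.2.2.2.1 x y z ((hin x hx y hy).1 hxy) ((hin y hy z hz).1 hyz))
    · -- x,y ∈ Y, z ∉ Y : need s x z
      have hyz' := (hout y z (Or.inr hz)).1 hyz
      refine (hout x z (Or.inr hz)).2 ?_
      rcases hlin.total x z with h | h
      · exact h
      · exact absurd ⟨hyz', h⟩ (hcons z hz y hy x hx)
    · -- x,z ∈ Y, y ∉ Y : contradiction with consecutive
      have hxy' := (hout x y (Or.inr hy)).1 hxy
      have hyz' := (hout y z (Or.inl hy)).1 hyz
      exact absurd ⟨hxy', hyz'⟩ (hcons y hy x hx z hz)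
    · have hxy' := (hout x y (Or.inr hy)).1 hxy
      have hyz' := (hout y z (Or.inl hy)).1 hyz
      exact (hout x z (Or.inr hz)).2 (hlin.trans x y z hxy' hyz')
    · -- x ∉ Y, y,z ∈ Y : need s x z
      have hxy' := (hout x y (Or.inl hx)).1 hxy
      refine (hout x z (Or.inl hx)).2 ?_
      rcases hlin.total x z with h | h
      · exact h
      · exact absurd ⟨h, hxy'⟩ (hcons x hx z hz y hy)
    · have hxy' := (hout x y (Or.inl hx)).1 hxy
      have hyz' := (hout y z (Or.inr hz)).1 hyz
      exact (hout x z (Or.inl hx)).2 (hlin.trans x y z hxy' hyz')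
    · have hxy' := (hout x y (Or.inl hx)).1 hxy
      have hyz' := (hout y z (Or.inl hy)).1 hyz
      exact (hout x z (Or.inl hx)).2 (hlin.trans x y z hxy' hyz')
    · have hxy' := (hout x y (Or.inl hx)).1 hxy
      have hyz' := (hout y z (Or.inl hy)).1 hyz
      exact (hout x z (Or.inl hx)).2 (hlin.trans x y z hxy' hyz')
  have hanti : ∀ x y, t x y → t y x → x = y := by
    intro x y hxy hyx
    by_cases hx : x ∈ Y <;> by_cases hy : y ∈ Y
    · exact hY₂.2.2.1 x y ((hin x hx y hy).1 hxy) ((hin y hy x hx).1 hyx)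
    · exact hlin.antisymm x y ((hout x y (Or.inr hy)).1 hxy) ((hout y x (Or.inl hy)).1 hyx)
    · exact hlin.antisymm x y ((hout x y (Or.inl hx)).1 hxy) ((hout y x (Or.inr hx)).1 hyx)
    · exact hlin.antisymm x y ((hout x y (Or.inl hx)).1 hxy) ((hout y x (Or.inl hy)).1 hyx)
  have htot : ∀ x y, t x y ∨ t y x := by
    intro x y
    by_cases hx : x ∈ Y <;> by_cases hy : y ∈ Y
    · rcases hY₂.2.2.2.2 x hx y hy with h | h
      · exact Or.inl ((hin x hx y hy).2 h)
      · exact Or.inr ((hin y hy x hx).2 h)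
    · rcases hlin.total x y with h | h
      · exact Or.inl ((hout x y (Or.inr hy)).2 h)
      · exact Or.inr ((hout y x (Or.inl hy)).2 h)
    · rcases hlin.total x y with h | h
      · exact Or.inl ((hout x y (Or.inl hx)).2 h)
      · exact Or.inr ((hout y x (Or.inr hx)).2 h)
    · rcases hlin.total x y with h | h
      · exact Or.inl ((hout x y (Or.inl hx)).2 h)
      · exact Or.inr ((hout y x (Or.inl hy)).2 h)
  refine ⟨⟨?_, ?_⟩, ?_, ?_⟩
  · exact { refl := hrefl, trans := htrans, antisymm := hanti, total := htot }
  · intro x y hrxy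
    by_cases hx : x ∈ Y <;> by_cases hy : y ∈ Y
    · exact (hin x hx y hy).2 (hY₂ext x hx y hy hrxy)
    · exact (hout x y (Or.inr hy)).2 (hext x y hrxy)
    · exact (hout x y (Or.inl hx)).2 (hext x y hrxy)
    · exact (hout x y (Or.inl hx)).2 (hext x y hrxy)
  · intro x hx y hy y' hy' ⟨h1, h2⟩
    exact hcons x hx y hy y' hy' ⟨(hout y x (Or.inr hx)).1 h1, (hout x y' (Or.inl hx)).1 h2⟩
  · exact hin
end

section
/- Let X be a finite poset with a labeling δ: X → ℚ and γ a path, and consider the formal sums over linear extensions defining Yamamoto-type symbols I(X) := Σ_{Ȳ ∈ Tot(X)} I(Ȳ) in the shuffle algebra of words on ℚ between the endpoints γ(0), γ(1). Then for disjoint posets X and Y, I(X ⊔ Y) = I(X) ⧢-product I(Y): namely Σ_{Z̄ ∈ Tot(X⊔Y)} (word of Z̄) = (Σ_{X̄ ∈ Tot(X)} word of X̄) ⧢ (Σ_{Ȳ ∈ Tot(Y)} word of Ȳ). -/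
/-- The list of all shuffles of two words. -/
def shuffles {α : Type*} : List α → List α → List (List α)
  | [], v => [v]
  | u, [] => [u]
  | a :: u, b :: v =>
      ((shuffles u (b :: v)).map (a :: ·)) ++ ((shuffles (a :: u) v).map (b :: ·))
  termination_by u v => u.length + v.length

/-- The shuffle product on the free ℚ-vector space on words over ℚ, given by
bilinear extension of `u ⧢ v = Σ_{w shuffle of u,v} w`. -/
noncomputable def shMul (f g : List ℚ →₀ ℚ) : List ℚ →₀ ℚ :=
  f.sum fun u cu => g.sum fun v cv =>
    cu • cv • ((shuffles u v).map fun w => Finsupp.single w (1 : ℚ)).sum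

/-- An enumeration `e : Fin n ≃ Z` encodes a linear extension of `r` when the
order of indices extends `r`. -/
def IsLinExtEnum {Z : Type*} [Fintype Z] (r : Z → Z → Prop)
    (e : Fin (Fintype.card Z) ≃ Z) : Prop :=
  ∀ i j : Fin (Fintype.card Z), r (e i) (e j) → i ≤ j

/-- `I(X) = Σ_{Ȳ ∈ Tot(X)} (word of Ȳ)`: the formal sum of the words (lists of
labels read in increasing order) of all linear extensions of `(Z, r)`. -/
noncomputable def wordSum {Z : Type*} [Fintype Z] (r : Z → Z → Prop)
    (δ : Z → ℚ) : List ℚ →₀ ℚ :=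
  ∑ᶠ e ∈ {e : Fin (Fintype.card Z) ≃ Z | IsLinExtEnum r e},
    Finsupp.single (List.ofFn fun i => δ (e i)) (1 : ℚ)

/-!
A linear extension of `X ⊔ Y`, listed in increasing order, restricts to linear extensions of
`X` and of `Y`; conversely, since no element of `X` is comparable with an element of `Y`, every
interleaving of a linear extension of `X` with one of `Y` is a linear extension of `X ⊔ Y`.
So the linear extensions of `X ⊔ Y` lying over a given pair of extensions are exactly their
shuffles, each occurring once, and summing the words fibrewise gives the shuffle product.
-/

section Shuffles

variable {α β : Type*}

theorem shuffles_nil_right (u : List α) : shuffles u [] = [u] := by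
  cases u <;> simp [shuffles]

theorem nil_mem_shuffles_iff {u v : List α} : [] ∈ shuffles u v ↔ u = [] ∧ v = [] := by
  cases u <;> cases v <;> simp [shuffles]

theorem cons_mem_shuffles_iff {c : α} {w : List α} : ∀ {u v : List α},
    c :: w ∈ shuffles u v ↔
      (∃ u', u = c :: u' ∧ w ∈ shuffles u' v) ∨ (∃ v', v = c :: v' ∧ w ∈ shuffles u v')
  | [], v => by cases v <;> simp [shuffles, eq_comm]
  | a :: u, [] => by simp [shuffles_nil_right, eq_comm]
  | a :: u, b :: v => by simp [shuffles, and_comm, eq_comm]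

theorem nodup_shuffles : ∀ {u v : List α}, (∀ a ∈ u, ∀ b ∈ v, a ≠ b) → (shuffles u v).Nodup
  | [], v, _ => by simp [shuffles]
  | a :: u, [], _ => by simp [shuffles_nil_right]
  | a :: u, b :: v, h => by
    rw [shuffles]
    refine .append
      ((nodup_shuffles fun x hx y hy => h x (.tail a hx) y hy).map List.cons_injective)
      ((nodup_shuffles fun x hx y hy => h x hx y (.tail b hy)).map List.cons_injective) ?_
    simp only [List.disjoint_left, List.mem_map]
    rintro _ ⟨s, -, rfl⟩ ⟨t, -, hts⟩
    exact h a List.mem_cons_self b List.mem_cons_self (List.cons_eq_cons.mp hts).1.symm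
  termination_by u v => u.length + v.length

theorem shuffles_map (f : α → β) : ∀ u v : List α,
    (shuffles u v).map (List.map f) = shuffles (u.map f) (v.map f)
  | [], v => by simp [shuffles]
  | a :: u, [] => by simp [shuffles]
  | a :: u, b :: v => by
    have h₁ := shuffles_map f u (b :: v)
    have h₂ := shuffles_map f (a :: u) v
    simp only [List.map_cons] at h₁ h₂
    rw [shuffles, List.map_cons, List.map_cons, shuffles, ← h₁, ← h₂]
    simp [Function.comp_def]
  termination_by u v => u.length + v.length

theorem mem_shuffles_map_inl_map_inr_iff (w : List (α ⊕ β)) {u : List α} {v : List β} :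
    w ∈ shuffles (u.map .inl) (v.map .inr) ↔
      w.filterMap Sum.getLeft? = u ∧ w.filterMap Sum.getRight? = v := by
  induction w generalizing u v with
  | nil => simp [nil_mem_shuffles_iff]
  | cons c w ih =>
    cases c <;> simp [cons_mem_shuffles_iff, List.map_eq_cons_iff, ih, List.filterMap_cons]
      <;> grind

theorem List.pairwise_iff_filterMap_getLeft?_getRight? {R : α → α → Prop} {S : β → β → Prop}
    {T : α ⊕ β → α ⊕ β → Prop} (hl : ∀ a a', T (.inl a) (.inl a') ↔ R a a')
    (hr : ∀ b b', T (.inr b) (.inr b') ↔ S b b') (hlr : ∀ a b, T (.inl a) (.inr b))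
    (hrl : ∀ b a, T (.inr b) (.inl a)) (l : List (α ⊕ β)) :
    l.Pairwise T ↔
      (l.filterMap Sum.getLeft?).Pairwise R ∧ (l.filterMap Sum.getRight?).Pairwise S := by
  rw [List.pairwise_filterMap, List.pairwise_filterMap, ← List.pairwise_and_iff]
  refine List.Pairwise.iff fun z z' => ?_
  cases z <;> cases z' <;> simp [*]

theorem List.forall_mem_iff_filterMap_getLeft?_getRight? (l : List (α ⊕ β)) :
    (∀ z, z ∈ l) ↔
      (∀ a, a ∈ l.filterMap Sum.getLeft?) ∧ ∀ b, b ∈ l.filterMap Sum.getRight? := by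
  simp [Sum.forall]

end Shuffles

section LinearExtensions

variable {Z : Type*} (r : Z → Z → Prop)

/-- The linear extensions of `r`, each listed in increasing order. -/
def linExtLists : Set (List Z) :=
  {l | (∀ z, z ∈ l) ∧ l.Nodup ∧ l.Pairwise fun a b => ¬ r b a}

variable {r}

theorem ofFn_mem_linExtLists_iff [Fintype Z] (e : Fin (Fintype.card Z) ≃ Z) :
    List.ofFn e ∈ linExtLists r ↔ IsLinExtEnum r e := by
  simp only [linExtLists, Set.mem_ofPred_eq, List.mem_ofFn, List.nodup_ofFn, e.injective,
    true_and]
  constructor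
  · rintro ⟨-, hpw⟩ i j hr
    exact not_lt.mp fun hji => List.pairwise_ofFn.mp hpw hji hr
  · exact fun h => ⟨e.surjective, List.pairwise_ofFn.mpr fun i j hij hr => (h j i hr).not_gt hij⟩

theorem exists_ofFn_eq_of_mem_linExtLists [Fintype Z] {l : List Z} (hl : l ∈ linExtLists r) :
    ∃ e : Fin (Fintype.card Z) ≃ Z, List.ofFn e = l := by
  classical
  obtain ⟨hcomp, hnd, -⟩ := hl
  let e := hnd.getEquivOfForallMemList l hcomp
  have hlen : l.length = Fintype.card Z := by simpa using Fintype.card_congr e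
  exact ⟨(finCongr hlen).symm.trans e, by simp [e, List.ofFn_congr hlen.symm]⟩

variable (r)

theorem linExtLists_eq_image [Fintype Z] :
    linExtLists r =
      (fun e : Fin (Fintype.card Z) ≃ Z => List.ofFn e) '' {e | IsLinExtEnum r e} := by
  ext l
  constructor
  · intro hl
    obtain ⟨e, rfl⟩ := exists_ofFn_eq_of_mem_linExtLists hl
    exact ⟨e, (ofFn_mem_linExtLists_iff e).mp hl, rfl⟩
  · rintro ⟨e, he, rfl⟩
    exact (ofFn_mem_linExtLists_iff e).mpr he

theorem linExtLists_finite [Fintype Z] : (linExtLists r).Finite :=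
  linExtLists_eq_image r ▸ (Set.toFinite _).image _

theorem wordSum_eq_sum_linExtLists [Fintype Z] (δ : Z → ℚ) :
    wordSum r δ = ∑ l ∈ (linExtLists_finite r).toFinset, Finsupp.single (l.map δ) 1 := by
  have hinj : Set.InjOn (fun e : Fin (Fintype.card Z) ≃ Z => List.ofFn e)
      {e | IsLinExtEnum r e} :=
    fun e₁ _ e₂ _ h => DFunLike.coe_injective (List.ofFn_injective h)
  rw [← finsum_mem_coe_finset, Set.Finite.coe_toFinset, linExtLists_eq_image,
    finsum_mem_image hinj]
  simp [wordSum, List.map_ofFn, Function.comp_def]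

theorem mem_linExtLists_liftRel_iff {X Y : Type*} (rX : X → X → Prop) (rY : Y → Y → Prop)
    (l : List (X ⊕ Y)) : l ∈ linExtLists (Sum.LiftRel rX rY) ↔
      l.filterMap Sum.getLeft? ∈ linExtLists rX ∧ l.filterMap Sum.getRight? ∈ linExtLists rY := by
  have hnodup := List.pairwise_iff_filterMap_getLeft?_getRight?
    (R := (· ≠ ·)) (S := (· ≠ ·)) (T := (· ≠ ·)) (by simp) (by simp) (by simp) (by simp) l
  have hpairwise := List.pairwise_iff_filterMap_getLeft?_getRight?
    (R := fun a a' => ¬ rX a' a) (S := fun b b' => ¬ rY b' b)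
    (T := fun z z' => ¬ Sum.LiftRel rX rY z' z) (by simp) (by simp) (by simp) (by simp) l
  simp only [linExtLists, Set.mem_ofPred_eq, List.Nodup, hnodup, hpairwise,
    List.forall_mem_iff_filterMap_getLeft?_getRight? l]
  tauto

end LinearExtensions

theorem shMul_sum_sum {ι κ : Type*} (s : Finset ι) (t : Finset κ)
    (F : ι → List ℚ →₀ ℚ) (G : κ → List ℚ →₀ ℚ) :
    shMul (∑ i ∈ s, F i) (∑ j ∈ t, G j) = ∑ i ∈ s, ∑ j ∈ t, shMul (F i) (G j) := by
  simp only [shMul]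
  rw [← Finsupp.sum_finsetSum_index (by simp) (by intros; simp [add_smul])]
  refine Finset.sum_congr rfl fun i _ => ?_
  rw [← Finsupp.sum_finsetSum_comm]
  refine Finsupp.sum_congr fun u _ => ?_
  exact (Finsupp.sum_finsetSum_index (by simp) (by intros; simp [add_smul, smul_add])).symm

theorem shMul_single_single (u v : List ℚ) :
    shMul (Finsupp.single u 1) (Finsupp.single v 1) =
      ((shuffles u v).map fun w => Finsupp.single w 1).sum := by
  simp [shMul]

theorem shMul_single_map_single_map {X Y : Type*} [DecidableEq X] [DecidableEq Y]
    (δX : X → ℚ) (δY : Y → ℚ) (lX : List X) (lY : List Y) :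
    shMul (Finsupp.single (lX.map δX) 1) (Finsupp.single (lY.map δY) 1) =
      ∑ l ∈ (shuffles (lX.map .inl) (lY.map .inr)).toFinset,
        Finsupp.single (l.map (Sum.elim δX δY)) 1 := by
  rw [List.sum_toFinset _ (nodup_shuffles (by simp)),
    show lX.map δX = (lX.map .inl).map (Sum.elim δX δY) by simp,
    show lY.map δY = (lY.map .inr).map (Sum.elim δX δY) by simp, shMul_single_single,
    ← shuffles_map, List.map_map]
  rfl

theorem filter_linExtLists_liftRel_eq_toFinset_shuffles {X Y : Type*} [Fintype X] [Fintype Y]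
    [DecidableEq X] [DecidableEq Y] {rX : X → X → Prop} {rY : Y → Y → Prop}
    {lX : List X} {lY : List Y} (hX : lX ∈ linExtLists rX) (hY : lY ∈ linExtLists rY) :
    {l ∈ (linExtLists_finite (Sum.LiftRel rX rY)).toFinset |
        (l.filterMap Sum.getLeft?, l.filterMap Sum.getRight?) = (lX, lY)} =
      (shuffles (lX.map .inl) (lY.map .inr)).toFinset := by
  ext l
  simp only [Finset.mem_filter, Set.Finite.mem_toFinset, mem_linExtLists_liftRel_iff,
    Prod.mk.injEq, List.mem_toFinset, mem_shuffles_map_inl_map_inr_iff]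
  constructor
  · exact fun h => h.2
  · rintro ⟨rfl, rfl⟩
    exact ⟨⟨hX, hY⟩, rfl, rfl⟩

theorem stmt18_general {X Y : Type*} [Fintype X] [Fintype Y]
    (rX : X → X → Prop) (rY : Y → Y → Prop)
    (δX : X → ℚ) (δY : Y → ℚ) :
    wordSum (Sum.LiftRel rX rY) (Sum.elim δX δY) =
      shMul (wordSum rX δX) (wordSum rY δY) := by
  classical
  have hrestrict : ∀ l ∈ (linExtLists_finite (Sum.LiftRel rX rY)).toFinset,
      (l.filterMap Sum.getLeft?, l.filterMap Sum.getRight?) ∈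
        (linExtLists_finite rX).toFinset ×ˢ (linExtLists_finite rY).toFinset := by
    simp [mem_linExtLists_liftRel_iff]
  rw [wordSum_eq_sum_linExtLists, wordSum_eq_sum_linExtLists, wordSum_eq_sum_linExtLists,
    shMul_sum_sum, ← Finset.sum_fiberwise_of_maps_to hrestrict, Finset.sum_product]
  refine Finset.sum_congr rfl fun lX hX => Finset.sum_congr rfl fun lY hY => ?_
  rw [Set.Finite.mem_toFinset] at hX hY
  rw [filter_linExtLists_liftRel_eq_toFinset_shuffles hX hY, shMul_single_map_single_map]

/-- for disjoint finite labeled posets `X` and `Y`, the sum of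
words over linear extensions of `X ⊔ Y` equals the shuffle product of the
corresponding sums for `X` and `Y`: `I(X ⊔ Y) = I(X) ⧢ I(Y)`. -/
theorem stmt18 {X Y : Type*} [Fintype X] [Fintype Y]
    (rX : X → X → Prop) (rY : Y → Y → Prop)
    (hX : IsPartialOrder X rX) (hY : IsPartialOrder Y rY)
    (δX : X → ℚ) (δY : Y → ℚ) :
    wordSum (Sum.LiftRel rX rY) (Sum.elim δX δY) =
      shMul (wordSum rX δX) (wordSum rY δY) :=
  stmt18_general rX rY δX δY
end
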